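/- Let α ∈ (0,1), δ ∈ (0,1], and c ∈ [0,1]. Let Ĉ_n be a prediction-interval algorithm satisfying (1−cαδ)-MC, and define Ĉ'_n as follows: at a test point x, independently of x and of the training data, with probability (1−α)/(1−cα) set Ĉ'_n(x) = Ĉ_n(x), and otherwise set Ĉ'_n(x) = ∅. Then Ĉ'_n satisfies (1−α,δ)-CC. -/

import Mathlib

open MeasureTheory
open scoped ENNReal

noncomputable section

/-- A data point: a feature vector in `ℝ^d` together with a real response. -/
abbrev Pt (d : ℕ) : Type := (Fin d → ℝ) × ℝ

/-- A prediction-interval algorithm: maps the training data, auxiliary randomness, and a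
feature point to a subset of `ℝ`. -/
abbrev PredAlg (d n : ℕ) (Ω : Type) : Type :=
  (Fin n → Pt d) → Ω → (Fin d → ℝ) → Set ℝ

/-- Joint law of `n+1` i.i.d. data points from `P` together with independent auxiliary
randomness drawn from `μΩ`. -/
def joint (d n : ℕ) (P : Measure (Pt d)) {Ω : Type} [MeasurableSpace Ω] (μΩ : Measure Ω)
    [SFinite μΩ] : Measure ((Fin (n + 1) → Pt d) × Ω) :=
  (Measure.pi fun _ : Fin (n + 1) => P).prod μΩ

/-- The coverage event `Y_{n+1} ∈ Ĉ_n(X_{n+1})`, where the first `n` data points are the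
training data and the last one is the test point. -/
def covEvent {d n : ℕ} {Ω : Type} (C : PredAlg d n Ω) : Set ((Fin (n + 1) → Pt d) × Ω) :=
  {q | (q.1 (Fin.last n)).2 ∈ C (fun i => q.1 i.castSucc) q.2 (q.1 (Fin.last n)).1}

/-- The event `X_{n+1} ∈ 𝒳`. -/
def testEvent (d n : ℕ) (Ω : Type) (𝒳 : Set (Fin d → ℝ)) : Set ((Fin (n + 1) → Pt d) × Ω) :=
  {q | (q.1 (Fin.last n)).1 ∈ 𝒳}

/-- Distribution-free marginal coverage at level `t` (`(1-β)`-MC means `MC _ _ _ _ (1-β)`):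
for every distribution `P`, the probability of coverage is at least `t`. -/
def MC (d n : ℕ) {Ω : Type} [MeasurableSpace Ω] (μΩ : Measure Ω) [SFinite μΩ]
    (C : PredAlg d n Ω) (t : ℝ) : Prop :=
  ∀ P : Measure (Pt d), IsProbabilityMeasure P →
    ENNReal.ofReal t ≤ joint d n P μΩ (covEvent C)

/-- Distribution-free approximate conditional coverage at level `1 - α` and tolerance `δ`:
for every distribution `P` and every measurable `𝒳` with `P_X(𝒳) ≥ δ`,
`P(Y_{n+1} ∈ Ĉ_n(X_{n+1}) ∧ X_{n+1} ∈ 𝒳) ≥ (1-α) ⬝ P(X_{n+1} ∈ 𝒳)`, i.e. the conditional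
coverage probability given `X_{n+1} ∈ 𝒳` is at least `1 - α`. -/
def ACC (d n : ℕ) {Ω : Type} [MeasurableSpace Ω] (μΩ : Measure Ω) [SFinite μΩ]
    (C : PredAlg d n Ω) (α δ : ℝ) : Prop :=
  ∀ P : Measure (Pt d), IsProbabilityMeasure P →
    ∀ 𝒳 : Set (Fin d → ℝ), MeasurableSet 𝒳 → ENNReal.ofReal δ ≤ P {q | q.1 ∈ 𝒳} →
      ENNReal.ofReal (1 - α) * joint d n P μΩ (testEvent d n Ω 𝒳) ≤
        joint d n P μΩ (covEvent C ∩ testEvent d n Ω 𝒳)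


/-!
Marginal coverage `1 - cαδ` leaves at most `cαδ ≤ cα · P(X ∈ 𝒳)` of miscoverage for the event
`X ∈ 𝒳` when `P(X ∈ 𝒳) ≥ δ`, so `Ĉ_n` covers with conditional probability at least `1 - cα`
on every such event. The independent coin keeps `Ĉ_n` with probability `(1 - α)/(1 - cα)`, which
scales that conditional coverage down to exactly `1 - α`.
-/

namespace MeasureTheory.Measure

lemma prod_prod_preimage_prodAssoc_symm {α β γ : Type*} [MeasurableSpace α] [MeasurableSpace β]
    [MeasurableSpace γ] (μ : Measure α) (ν : Measure β) (ξ : Measure γ) [SFinite ν] [SFinite ξ]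
    (s : Set (α × β)) (t : Set γ) :
    μ.prod (ν.prod ξ) (MeasurableEquiv.prodAssoc.symm ⁻¹' s ×ˢ t) = μ.prod ν s * ξ t := by
  rw [((measurePreserving_prodAssoc μ ν ξ).symm _).measure_preimage_equiv, prod_prod]

end MeasureTheory.Measure

lemma ofReal_one_sub_mul_measure_le_measure_inter {X : Type*} [MeasurableSpace X] {μ : Measure X}
    [IsProbabilityMeasure μ] {A B : Set X} (hB : MeasurableSet B) {ε δ : ℝ} (hε : 0 ≤ ε)
    (hA : ENNReal.ofReal (1 - ε * δ) ≤ μ A) (hδ : ENNReal.ofReal δ ≤ μ B) :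
    ENNReal.ofReal (1 - ε) * μ B ≤ μ (A ∩ B) := by
  rw [ENNReal.ofReal_le_iff_le_toReal (measure_ne_top _ _), ← measureReal_def] at hA hδ
  have hsplit : μ.real A ≤ μ.real (A ∩ B) + (1 - μ.real B) := by
    calc μ.real A ≤ μ.real ((A ∩ B) ∪ Bᶜ) := measureReal_mono fun x hx => by
          by_cases h : x ∈ B <;> simp [hx, h]
    _ ≤ μ.real (A ∩ B) + μ.real Bᶜ := measureReal_union_le _ _
    _ = μ.real (A ∩ B) + (1 - μ.real B) := by rw [probReal_compl_eq_one_sub hB]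
  have hB0 : 0 ≤ μ.real B := measureReal_nonneg
  rw [← ofReal_measureReal, ← ofReal_measureReal, ← ENNReal.ofReal_mul' hB0]
  refine ENNReal.ofReal_le_ofReal ?_
  nlinarith [mul_le_mul_of_nonneg_left hδ hε]

section

variable {d n : ℕ} {Ω : Type} [MeasurableSpace Ω]

def thinByCoin (C : PredAlg d n Ω) : PredAlg d n (Ω × Bool) :=
  fun td p x => if p.2 = true then C td p.1 x else ∅

lemma covEvent_thinByCoin_inter_testEvent (C : PredAlg d n Ω) (𝒳 : Set (Fin d → ℝ)) :
    covEvent (thinByCoin C) ∩ testEvent d n (Ω × Bool) 𝒳 =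
      MeasurableEquiv.prodAssoc.symm ⁻¹' (covEvent C ∩ testEvent d n Ω 𝒳) ×ˢ {true} := by
  ext ⟨f, ω, b⟩
  cases b <;> simp [covEvent, testEvent, thinByCoin, MeasurableEquiv.prodAssoc]

lemma joint_covEvent_thinByCoin_inter_testEvent (P : Measure (Pt d)) (μΩ : Measure Ω)
    [SFinite μΩ] (ζ : Measure Bool) [SFinite ζ] (C : PredAlg d n Ω) (𝒳 : Set (Fin d → ℝ)) :
    joint d n P (μΩ.prod ζ) (covEvent (thinByCoin C) ∩ testEvent d n (Ω × Bool) 𝒳) =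
      joint d n P μΩ (covEvent C ∩ testEvent d n Ω 𝒳) * ζ {true} := by
  rw [covEvent_thinByCoin_inter_testEvent, joint, joint,
    Measure.prod_prod_preimage_prodAssoc_symm]

instance isProbabilityMeasure_joint (P : Measure (Pt d)) [IsProbabilityMeasure P]
    (μΩ : Measure Ω) [IsProbabilityMeasure μΩ] : IsProbabilityMeasure (joint d n P μΩ) := by
  unfold joint; infer_instance

lemma measurableSet_testEvent {𝒳 : Set (Fin d → ℝ)} (h𝒳 : MeasurableSet 𝒳) :
    MeasurableSet (testEvent d n Ω 𝒳) :=
  (measurable_fst.comp ((measurable_pi_apply _).comp measurable_fst)) h𝒳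

lemma joint_testEvent (P : Measure (Pt d)) [IsProbabilityMeasure P] (μΩ : Measure Ω)
    [IsProbabilityMeasure μΩ] {𝒳 : Set (Fin d → ℝ)} (h𝒳 : MeasurableSet 𝒳) :
    joint d n P μΩ (testEvent d n Ω 𝒳) = P {q | q.1 ∈ 𝒳} :=
  ((measurePreserving_eval (fun _ => P) (Fin.last n)).comp
    (measurePreserving_fst (ν := μΩ))).measure_preimage (measurable_fst h𝒳).nullMeasurableSet

end

theorem randomized_mc_implies_approx_cc_general (d n : ℕ) (Ω : Type) [MeasurableSpace Ω]
    (μΩ : Measure Ω) [IsProbabilityMeasure μΩ] (α δ c : ℝ)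
    (hα : α ∈ Set.Ioo (0 : ℝ) 1) (hc : c ∈ Set.Icc (0 : ℝ) 1)
    (C : PredAlg d n Ω)
    (hMC : MC d n μΩ C (1 - c * α * δ))
    (ζ : Measure Bool) [IsProbabilityMeasure ζ]
    (hζ : ζ {true} = ENNReal.ofReal ((1 - α) / (1 - c * α))) :
    ACC d n (μΩ.prod ζ)
      (fun td p x => if p.2 = true then C td p.1 x else (∅ : Set ℝ)) α δ := by
  change ACC d n (μΩ.prod ζ) (thinByCoin C) α δ
  intro P _ 𝒳 h𝒳 hδ𝒳
  have hcα : c * α < 1 := by nlinarith [hα.1, hα.2, hc.1, hc.2]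
  have hfactor : ENNReal.ofReal (1 - α) =
      ENNReal.ofReal ((1 - α) / (1 - c * α)) * ENNReal.ofReal (1 - c * α) := by
    rw [← ENNReal.ofReal_mul (div_nonneg (by linarith [hα.2]) (by linarith)),
      div_mul_cancel₀ _ (by linarith)]
  rw [joint_covEvent_thinByCoin_inter_testEvent, joint_testEvent P _ h𝒳,
    ← joint_testEvent P μΩ h𝒳, hζ, hfactor, mul_assoc, mul_comm _ (ENNReal.ofReal _)]
  gcongr
  rw [← joint_testEvent P μΩ h𝒳] at hδ𝒳
  exact ofReal_one_sub_mul_measure_le_measure_inter (measurableSet_testEvent h𝒳)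
    (mul_nonneg hc.1 hα.1.le) (hMC P ‹_›) hδ𝒳

/-- **Lemma 2: randomized reduction from marginal coverage.** If `Ĉ_n` satisfies
`(1 - cαδ)`-MC and `Ĉ'_n(x)` equals `Ĉ_n(x)` with probability `(1-α)/(1-cα)` (independently
of `x` and of the training data, here encoded by an independent coin `b : Bool` with
`ζ({true}) = (1-α)/(1-cα)`) and `∅` otherwise, then `Ĉ'_n` satisfies `(1-α,δ)`-CC. -/
theorem randomized_mc_implies_approx_cc (d n : ℕ) (Ω : Type) [MeasurableSpace Ω]
    (μΩ : Measure Ω) [IsProbabilityMeasure μΩ] (α δ c : ℝ)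
    (hα : α ∈ Set.Ioo (0 : ℝ) 1) (hδ : δ ∈ Set.Ioc (0 : ℝ) 1) (hc : c ∈ Set.Icc (0 : ℝ) 1)
    (C : PredAlg d n Ω)
    (hC : MeasurableSet {p : ((Fin n → Pt d) × Ω × (Fin d → ℝ)) × ℝ |
      p.2 ∈ C p.1.1 p.1.2.1 p.1.2.2})
    (hMC : MC d n μΩ C (1 - c * α * δ))
    (ζ : Measure Bool) [IsProbabilityMeasure ζ]
    (hζ : ζ {true} = ENNReal.ofReal ((1 - α) / (1 - c * α))) :
    ACC d n (μΩ.prod ζ)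
      (fun td p x => if p.2 = true then C td p.1 x else (∅ : Set ℝ)) α δ :=
  randomized_mc_implies_approx_cc_general d n Ω μΩ α δ c hα hc C hMC ζ hζ
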